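/- Assume the standard scarred-sequence setting and suppose additionally given, for each N and each i ∈ I_N, a self-adjoint linear operator h_{N,i} on the M_N-qudit space that is supported on X_{N,i} and has operator norm ‖h_{N,i}‖ ≤ C_h, where C_h ≥ 0 is a constant independent of N and i. Then ‖(Σ_{i∈I_N} P_{N,i} ∘ h_{N,i} ∘ P_{N,i}) A_N‖ → 0 as N → ∞. -/

import Mathlib

open Filter
open scoped BigOperators

noncomputable section

/-- The `M`-qudit space: complex functions on configurations `Fin M → Fin d`,
with the standard (Euclidean) inner product. -/
abbrev QuditSpace (d M : ℕ) : Type := EuclideanSpace ℂ (Fin M → Fin d)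

/-- The computational basis vector indexed by the configuration `s`. -/
def basisVec {d M : ℕ} (s : Fin M → Fin d) : QuditSpace d M :=
  EuclideanSpace.single s 1

/-- The matrix element `⟨e_s, T e_t⟩` of an operator `T` on the qudit space. -/
def matElem {d M : ℕ} (T : QuditSpace d M →L[ℂ] QuditSpace d M)
    (s t : Fin M → Fin d) : ℂ :=
  inner ℂ (basisVec s) (T (basisVec t))

/-- `T` is supported on the set of sites `X`: its matrix elements vanish whenever the two
configurations differ at a site outside `X`, and (among configuration pairs agreeing
outside `X`) they depend only on the restrictions of the configurations to `X`. -/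
def SupportedOn {d M : ℕ} (X : Finset (Fin M))
    (T : QuditSpace d M →L[ℂ] QuditSpace d M) : Prop :=
  (∀ s t : Fin M → Fin d, (∃ j ∉ X, s j ≠ t j) → matElem T s t = 0) ∧
  (∀ s t s' t' : Fin M → Fin d,
      (∀ j ∈ X, s j = s' j) → (∀ j ∈ X, t j = t' j) →
      (∀ j ∉ X, s j = t j) → (∀ j ∉ X, s' j = t' j) →
      matElem T s t = matElem T s' t')

/-- An orthogonal projection: a self-adjoint idempotent operator. -/
def IsOrthProj {d M : ℕ} (P : QuditSpace d M →L[ℂ] QuditSpace d M) : Prop :=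
  (∀ v w : QuditSpace d M, (inner ℂ (P v) w : ℂ) = inner ℂ v (P w)) ∧ P ∘L P = P

/-!
Write `Q i = P i ∘L h i ∘L P i` and `ε = ‖(∑ i, P i) A‖`, and expand `‖(∑ i, Q i) A‖²` into the
pair terms `re ⟪Q i A, Q j A⟫`. If `X i` and `X j` are disjoint, `P i` and `h i` commute with
`P j` and `h j`, so the term is `re ⟪h i w, h j w⟫` with `w = P i (P j A)`, at most
`Ch² ‖w‖² = Ch² re ⟪P i A, P j A⟫`. Otherwise it is at most `Ch² ‖P i A‖ ‖P j A‖`, which is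
`Ch² re ⟪P i A, P j A⟫` plus at most `2 Ch² ‖P i A‖ ‖P j A‖`. The terms `re ⟪P i A, P j A⟫`
over all pairs add up to `ε²`; each `i` overlaps at most `C + 1` indices, so by AM-GM the
corrections add up to at most `2 (C + 1) Ch² ∑ i, ‖P i A‖²`, and
`∑ i, ‖P i A‖² = re ⟪A, (∑ i, P i) A⟫ ≤ ε`.
Hence `‖(∑ i, Q i) A‖² = O(ε² + ε)`.
-/

open Finset RCLike
open scoped InnerProductSpace

theorem Finset.sum_sum_mul_le_of_card_le {ι : Type*} [Fintype ι] (nb : ι → Finset ι)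
    (hnb : ∀ i j, j ∈ nb i → i ∈ nb j) {D : ℕ} (hD : ∀ i, #(nb i) ≤ D) (a : ι → ℝ) :
    ∑ i, ∑ j ∈ nb i, a i * a j ≤ D * ∑ i, a i ^ 2 := by
  have hswap : ∑ i, ∑ j ∈ nb i, a j ^ 2 = ∑ i, ∑ j ∈ nb i, a i ^ 2 :=
    sum_comm' fun i j => by simpa using ⟨hnb i j, hnb j i⟩
  calc ∑ i, ∑ j ∈ nb i, a i * a j
      ≤ ∑ i, ∑ j ∈ nb i, (a i ^ 2 + a j ^ 2) / 2 :=
        sum_le_sum fun i _ => sum_le_sum fun j _ => by nlinarith [sq_nonneg (a i - a j)]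
    _ = ∑ i, #(nb i) * a i ^ 2 := by
        simp only [add_div, sum_add_distrib, ← sum_div, hswap, sum_const, nsmul_eq_mul]
        ring
    _ ≤ ∑ i, D * a i ^ 2 := by gcongr with i; exact_mod_cast hD i
    _ = D * ∑ i, a i ^ 2 := (mul_sum ..).symm

section LocalOperators

variable {𝕜 E : Type*} [RCLike 𝕜] [NormedAddCommGroup E] [InnerProductSpace 𝕜 E]

theorem norm_sum_sq_eq_sum_sum_re_inner {ι : Type*} (s : Finset ι) (x : ι → E) :
    ‖∑ i ∈ s, x i‖ ^ 2 = ∑ i ∈ s, ∑ j ∈ s, re ⟪x i, x j⟫_𝕜 := by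
  rw [← inner_self_eq_norm_sq (𝕜 := 𝕜), sum_inner, map_sum]
  simp only [inner_sum, map_sum]

namespace LinearMap.IsSymmetricProjection

variable {P : E →L[𝕜] E}

theorem apply_apply (hP : (P : E →ₗ[𝕜] E).IsSymmetricProjection) (v : E) : P (P v) = P v :=
  LinearMap.congr_fun hP.isIdempotentElem.eq v

theorem re_inner_apply_eq_norm_sq (hP : (P : E →ₗ[𝕜] E).IsSymmetricProjection) (v : E) :
    re ⟪v, P v⟫_𝕜 = ‖P v‖ ^ 2 := by
  rw [← inner_self_eq_norm_sq (𝕜 := 𝕜),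
    show ⟪P v, P v⟫_𝕜 = ⟪v, P (P v)⟫_𝕜 from hP.isSymmetric v (P v), hP.apply_apply]

theorem norm_apply_le (hP : (P : E →ₗ[𝕜] E).IsSymmetricProjection) (v : E) : ‖P v‖ ≤ ‖v‖ := by
  have h : ‖P v‖ ^ 2 ≤ ‖v‖ * ‖P v‖ :=
    hP.re_inner_apply_eq_norm_sq v ▸ (re_le_norm _).trans (norm_inner_le_norm _ _)
  nlinarith [norm_nonneg v, norm_nonneg (P v)]

theorem norm_apply_comp_apply_le (hP : (P : E →ₗ[𝕜] E).IsSymmetricProjection) (a : E →L[𝕜] E)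
    (v : E) : ‖P (a (P v))‖ ≤ ‖a‖ * ‖P v‖ :=
  (hP.norm_apply_le _).trans (a.le_opNorm _)

end LinearMap.IsSymmetricProjection

theorem sum_norm_apply_sq_le {ι : Type*} [Fintype ι] {P : ι → E →L[𝕜] E}
    (hP : ∀ i, (P i : E →ₗ[𝕜] E).IsSymmetricProjection) (v : E) :
    ∑ i, ‖P i v‖ ^ 2 ≤ ‖v‖ * ‖(∑ i, P i) v‖ :=
  calc ∑ i, ‖P i v‖ ^ 2 = re ⟪v, (∑ i, P i) v⟫_𝕜 := by
        simp only [_root_.sum_apply, inner_sum, map_sum,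
          fun i => (hP i).re_inner_apply_eq_norm_sq v]
    _ ≤ ‖v‖ * ‖(∑ i, P i) v‖ := (re_le_norm _).trans (norm_inner_le_norm _ _)

section Commuting

variable {p q : E →L[𝕜] E}

theorem Commute.apply_apply {a b : E →L[𝕜] E} (hab : Commute a b) (v : E) : a (b v) = b (a v) :=
  DFunLike.congr_fun hab.eq v

theorem norm_apply_apply_sq_of_commute (hp : (p : E →ₗ[𝕜] E).IsSymmetricProjection)
    (hq : (q : E →ₗ[𝕜] E).IsSymmetricProjection) (hpq : Commute p q) (v : E) :
    ‖p (q v)‖ ^ 2 = re ⟪p v, q v⟫_𝕜 := by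
  have h : ⟪p (q v), p (q v)⟫_𝕜 = ⟪q v, p v⟫_𝕜 :=
    calc ⟪p (q v), p (q v)⟫_𝕜 = ⟪q v, p (p (q v))⟫_𝕜 := hp.isSymmetric _ _
      _ = ⟪q v, q (p v)⟫_𝕜 := by rw [hp.apply_apply, hpq.apply_apply]
      _ = ⟪q (q v), p v⟫_𝕜 := (hq.isSymmetric _ _).symm
      _ = ⟪q v, p v⟫_𝕜 := by rw [hq.apply_apply]
  rw [← inner_self_eq_norm_sq (𝕜 := 𝕜), h, inner_re_symm]

theorem inner_apply_comp_apply_eq_of_commute {a b : E →L[𝕜] E}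
    (hp : (p : E →ₗ[𝕜] E).IsSymmetricProjection) (hq : (q : E →ₗ[𝕜] E).IsSymmetricProjection)
    (hpq : Commute p q) (hpb : Commute p b) (haq : Commute a q) (v : E) :
    ⟪p (a (p v)), q (b (q v))⟫_𝕜 = ⟪a (p (q v)), b (p (q v))⟫_𝕜 :=
  calc ⟪p (a (p v)), q (b (q v))⟫_𝕜 = ⟪a (p v), p (q (b (q v)))⟫_𝕜 := hp.isSymmetric _ _
    _ = ⟪a (p v), q (p (b (q v)))⟫_𝕜 := by rw [hpq.apply_apply]
    _ = ⟪q (a (p v)), b (p (q v))⟫_𝕜 := by rw [hpb.apply_apply]; exact (hq.isSymmetric _ _).symm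
    _ = ⟪a (p (q v)), b (p (q v))⟫_𝕜 := by rw [← haq.apply_apply, hpq.apply_apply]

theorem re_inner_apply_comp_apply_le_of_commute {a b : E →L[𝕜] E}
    (hp : (p : E →ₗ[𝕜] E).IsSymmetricProjection) (hq : (q : E →ₗ[𝕜] E).IsSymmetricProjection)
    (hpq : Commute p q) (hpb : Commute p b) (haq : Commute a q) (v : E) :
    re ⟪p (a (p v)), q (b (q v))⟫_𝕜 ≤ ‖a‖ * ‖b‖ * re ⟪p v, q v⟫_𝕜 := by
  rw [inner_apply_comp_apply_eq_of_commute hp hq hpq hpb haq,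
    ← norm_apply_apply_sq_of_commute hp hq hpq]
  set w := p (q v)
  calc re ⟪a w, b w⟫_𝕜 ≤ ‖a w‖ * ‖b w‖ := (re_le_norm _).trans (norm_inner_le_norm _ _)
    _ ≤ (‖a‖ * ‖w‖) * (‖b‖ * ‖w‖) :=
        mul_le_mul (a.le_opNorm w) (b.le_opNorm w) (norm_nonneg _) (by positivity)
    _ = ‖a‖ * ‖b‖ * ‖w‖ ^ 2 := by ring

end Commuting

theorem norm_sum_apply_comp_apply_sq_le {ι : Type*} [Fintype ι] {P h : ι → E →L[𝕜] E}
    {nb : ι → Finset ι} {D : ℕ} {Ch : ℝ}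
    (hP : ∀ i, (P i : E →ₗ[𝕜] E).IsSymmetricProjection) (hh : ∀ i, ‖h i‖ ≤ Ch)
    (hnb : ∀ i j, j ∈ nb i → i ∈ nb j) (hD : ∀ i, #(nb i) ≤ D)
    (hcomm : ∀ i j, j ∉ nb i → Commute (P i) (P j) ∧ Commute (P i) (h j) ∧ Commute (h i) (P j))
    (v : E) :
    ‖(∑ i, P i ∘L h i ∘L P i) v‖ ^ 2 ≤
      Ch ^ 2 * (‖(∑ i, P i) v‖ ^ 2 + 2 * D * (‖v‖ * ‖(∑ i, P i) v‖)) := by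
  classical
  have hCh : ∀ i j, ‖h i‖ * ‖h j‖ ≤ Ch ^ 2 := fun i j => by
    rw [sq]; exact mul_le_mul (hh i) (hh j) (norm_nonneg _) ((norm_nonneg _).trans (hh i))
  have hpair : ∀ i j, re ⟪P i (h i (P i v)), P j (h j (P j v))⟫_𝕜 ≤
      Ch ^ 2 * (re ⟪P i v, P j v⟫_𝕜 + 2 * if j ∈ nb i then ‖P i v‖ * ‖P j v‖ else 0) := by
    intro i j
    split_ifs with hij
    · have hre : -re ⟪P i v, P j v⟫_𝕜 ≤ ‖P i v‖ * ‖P j v‖ :=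
        (neg_le_abs _).trans ((abs_re_le_norm _).trans (norm_inner_le_norm _ _))
      calc _ ≤ ‖P i (h i (P i v))‖ * ‖P j (h j (P j v))‖ :=
            (re_le_norm _).trans (norm_inner_le_norm _ _)
        _ ≤ (‖h i‖ * ‖P i v‖) * (‖h j‖ * ‖P j v‖) :=
            mul_le_mul ((hP i).norm_apply_comp_apply_le _ _) ((hP j).norm_apply_comp_apply_le _ _)
              (norm_nonneg _) (by positivity)
        _ = (‖h i‖ * ‖h j‖) * (‖P i v‖ * ‖P j v‖) := by ring
        _ ≤ Ch ^ 2 * (‖P i v‖ * ‖P j v‖) := by gcongr; exact hCh i j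
        _ ≤ _ := by gcongr; linarith
    · obtain ⟨hPP, hPh, hhP⟩ := hcomm i j hij
      have hre : 0 ≤ re ⟪P i v, P j v⟫_𝕜 :=
        norm_apply_apply_sq_of_commute (hP i) (hP j) hPP v ▸ sq_nonneg _
      calc _ ≤ ‖h i‖ * ‖h j‖ * re ⟪P i v, P j v⟫_𝕜 :=
            re_inner_apply_comp_apply_le_of_commute (hP i) (hP j) hPP hPh hhP v
        _ ≤ _ := by simpa using mul_le_mul_of_nonneg_right (hCh i j) hre
  have hoverlap : ∑ i, ∑ j ∈ nb i, ‖P i v‖ * ‖P j v‖ ≤ D * (‖v‖ * ‖(∑ i, P i) v‖) :=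
    (sum_sum_mul_le_of_card_le nb hnb hD _).trans (by gcongr; exact sum_norm_apply_sq_le hP v)
  calc ‖(∑ i, P i ∘L h i ∘L P i) v‖ ^ 2
      = ∑ i, ∑ j, re ⟪P i (h i (P i v)), P j (h j (P j v))⟫_𝕜 := by
        rw [_root_.sum_apply, norm_sum_sq_eq_sum_sum_re_inner (𝕜 := 𝕜)]; rfl
    _ ≤ ∑ i, ∑ j, Ch ^ 2 *
          (re ⟪P i v, P j v⟫_𝕜 + 2 * if j ∈ nb i then ‖P i v‖ * ‖P j v‖ else 0) := by
        gcongr with i _ j _; exact hpair i j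
    _ = Ch ^ 2 * (‖(∑ i, P i) v‖ ^ 2 + 2 * ∑ i, ∑ j ∈ nb i, ‖P i v‖ * ‖P j v‖) := by
        rw [_root_.sum_apply, norm_sum_sq_eq_sum_sum_re_inner (𝕜 := 𝕜)]
        simp only [mul_sum, mul_add, sum_add_distrib, mul_ite, mul_zero, sum_ite_mem, univ_inter]
    _ ≤ Ch ^ 2 * (‖(∑ i, P i) v‖ ^ 2 + 2 * D * (‖v‖ * ‖(∑ i, P i) v‖)) := by
        rw [mul_assoc 2]; gcongr

end LocalOperators

theorem matElem_eq_toMatrix {d M : ℕ} (T : QuditSpace d M →L[ℂ] QuditSpace d M)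
    (s t : Fin M → Fin d) :
    matElem T s t =
      LinearMap.toMatrix (EuclideanSpace.basisFun _ ℂ).toBasis (EuclideanSpace.basisFun _ ℂ).toBasis
        (T : QuditSpace d M →ₗ[ℂ] QuditSpace d M) s t := by
  simp [matElem, basisVec, LinearMap.toMatrix_apply, EuclideanSpace.inner_single_left]

theorem matElem_comp {d M : ℕ} (T S : QuditSpace d M →L[ℂ] QuditSpace d M)
    (s t : Fin M → Fin d) :
    matElem (T ∘L S) s t = ∑ u, matElem T s u * matElem S u t := by
  simp only [matElem_eq_toMatrix]
  rw [ContinuousLinearMap.toLinearMap_comp,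
    LinearMap.toMatrix_comp _ (EuclideanSpace.basisFun _ ℂ).toBasis, Matrix.mul_apply]

theorem ContinuousLinearMap.ext_matElem {d M : ℕ} {T S : QuditSpace d M →L[ℂ] QuditSpace d M}
    (h : ∀ s t, matElem T s t = matElem S s t) : T = S := by
  simp only [matElem_eq_toMatrix] at h
  exact ContinuousLinearMap.coe_injective ((LinearMap.toMatrix _ _).injective (Matrix.ext h))

namespace SupportedOn

variable {d M : ℕ} {X Y : Finset (Fin M)} {T S : QuditSpace d M →L[ℂ] QuditSpace d M}

theorem matElem_comp_eq (hXY : Disjoint X Y) (hT : SupportedOn X T) (hS : SupportedOn Y S)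
    (s t : Fin M → Fin d) :
    matElem (T ∘L S) s t = matElem T s (X.piecewise t s) * matElem S (X.piecewise t s) t := by
  rw [matElem_comp]
  refine sum_eq_single _ (fun u _ hu => ?_) (fun h => absurd (mem_univ _) h)
  obtain ⟨j, hj⟩ := Function.ne_iff.mp hu
  by_cases hjX : j ∈ X
  · rw [piecewise_eq_of_mem _ _ _ hjX] at hj
    rw [hS.1 u t ⟨j, disjoint_left.mp hXY hjX, hj⟩, mul_zero]
  · rw [piecewise_eq_of_notMem _ _ _ hjX] at hj
    rw [hT.1 s u ⟨j, hjX, Ne.symm hj⟩, zero_mul]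

theorem commute_of_disjoint (hXY : Disjoint X Y) (hT : SupportedOn X T) (hS : SupportedOn Y S) :
    Commute T S := by
  refine ContinuousLinearMap.ext_matElem fun s t => ?_
  change matElem (T ∘L S) s t = matElem (S ∘L T) s t
  rw [hT.matElem_comp_eq hXY hS, hS.matElem_comp_eq hXY.symm hT]
  have hYX := disjoint_left.mp hXY.symm
  by_cases hst : ∀ j ∉ X, j ∉ Y → s j = t j
  · rw [hT.2 s _ (Y.piecewise t s) t, hS.2 (X.piecewise t s) t s (Y.piecewise t s), mul_comm] <;>
      intro j hj <;> by_cases j ∈ X <;> by_cases j ∈ Y <;> simp_all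
  · push Not at hst
    obtain ⟨j, hjX, hjY, hj⟩ := hst
    rw [hS.1 _ t ⟨j, hjY, by simpa [hjX] using hj⟩, hT.1 _ t ⟨j, hjX, by simpa [hjY] using hj⟩,
      mul_zero, mul_zero]

end SupportedOn

theorem IsOrthProj.isSymmetricProjection {d M : ℕ} {P : QuditSpace d M →L[ℂ] QuditSpace d M}
    (hP : IsOrthProj P) : (P : QuditSpace d M →ₗ[ℂ] QuditSpace d M).IsSymmetricProjection :=
  ⟨congrArg ContinuousLinearMap.toLinearMap hP.2, hP.1⟩

theorem card_filter_not_disjoint_le {ι α : Type*} [Fintype ι] [DecidableEq ι] [DecidableEq α]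
    (X : ι → Finset α) (i : ι) :
    #{j | ¬Disjoint (X i) (X j)} ≤ #{j | j ≠ i ∧ (X i ∩ X j).Nonempty} + 1 := by
  refine (card_le_card fun j hj => ?_).trans (card_insert_le i _)
  rw [mem_filter_univ, not_disjoint_iff_nonempty_inter] at hj
  rcases eq_or_ne j i with rfl | hji
  · exact mem_insert_self _ _
  · exact mem_insert_of_mem ((mem_filter_univ j).mpr ⟨hji, hj⟩)

theorem deformed_hamiltonian_asymptotically_annihilates_general
    (d C : ℕ)
    (M : ℕ → ℕ) (I : ℕ → Type) [∀ N, Fintype (I N)] [∀ N, DecidableEq (I N)]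
    (X : ∀ N, I N → Finset (Fin (M N)))
    (P : ∀ N, (i : I N) → QuditSpace d (M N) →L[ℂ] QuditSpace d (M N))
    (A : ∀ N, QuditSpace d (M N))
    (hC : ∀ N (i : I N),
      (Finset.univ.filter fun i' : I N => i' ≠ i ∧ (X N i ∩ X N i').Nonempty).card ≤ C)
    (hproj : ∀ N (i : I N), IsOrthProj (P N i))
    (hsupp : ∀ N (i : I N), SupportedOn (X N i) (P N i))
    (hA : ∀ N, ‖A N‖ = 1)
    (hlim : Tendsto (fun N => ‖(∑ i : I N, P N i) (A N)‖) atTop (nhds 0))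
    (Ch : ℝ)
    (h : ∀ N, (i : I N) → QuditSpace d (M N) →L[ℂ] QuditSpace d (M N))
    (hhsupp : ∀ N (i : I N), SupportedOn (X N i) (h N i))
    (hhnorm : ∀ N (i : I N), ‖h N i‖ ≤ Ch) :
    Tendsto (fun N => ‖(∑ i : I N, (P N i) ∘L (h N i) ∘L (P N i)) (A N)‖) atTop (nhds 0) := by
  have hbound : ∀ N, ‖(∑ i, P N i ∘L h N i ∘L P N i) (A N)‖ ^ 2 ≤
      Ch ^ 2 * (‖(∑ i, P N i) (A N)‖ ^ 2 + 2 * (C + 1 : ℕ) * ‖(∑ i, P N i) (A N)‖) := by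
    intro N
    have hcomm : ∀ i j, j ∉ ({j | ¬Disjoint (X N i) (X N j)} : Finset (I N)) →
        Commute (P N i) (P N j) ∧ Commute (P N i) (h N j) ∧ Commute (h N i) (P N j) := by
      intro i j hij
      rw [mem_filter_univ, not_not] at hij
      exact ⟨(hsupp N i).commute_of_disjoint hij (hsupp N j),
        (hsupp N i).commute_of_disjoint hij (hhsupp N j),
        (hhsupp N i).commute_of_disjoint hij (hsupp N j)⟩
    simpa [hA N] using norm_sum_apply_comp_apply_sq_le (fun i => (hproj N i).isSymmetricProjection)
      (hhnorm N) (fun i j hij => by simpa [disjoint_comm] using hij)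
      (fun i => (card_filter_not_disjoint_le (X N) i).trans (Nat.add_le_add_right (hC N i) 1))
      hcomm (A N)
  have hbound_lim : Tendsto (fun N => Ch ^ 2 * (‖(∑ i, P N i) (A N)‖ ^ 2 +
      2 * (C + 1 : ℕ) * ‖(∑ i, P N i) (A N)‖)) atTop (nhds 0) := by
    simpa using ((hlim.pow 2).add (hlim.const_mul _)).const_mul (Ch ^ 2)
  exact squeeze_zero (fun N => norm_nonneg _) (fun N => Real.le_sqrt_of_sq_le (hbound N))
    (by simpa using hbound_lim.sqrt)

/-- **Proposition 1 of the paper** (standard scarred-sequence setting): asymptotic zero-energy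
states of the reference Hamiltonian `∑ i P_{N,i}` are asymptotic zero modes of any deformed
Hamiltonian `∑ i P_{N,i} ∘ h_{N,i} ∘ P_{N,i}` with uniformly bounded self-adjoint local
generators `h_{N,i}` supported on the `X_{N,i}`. -/
theorem deformed_hamiltonian_asymptotically_annihilates
    (d K C : ℕ) (hd : 2 ≤ d)
    (M : ℕ → ℕ) (I : ℕ → Type) [∀ N, Fintype (I N)] [∀ N, DecidableEq (I N)]
    (X : ∀ N, I N → Finset (Fin (M N)))
    (P : ∀ N, (i : I N) → QuditSpace d (M N) →L[ℂ] QuditSpace d (M N))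
    (A : ∀ N, QuditSpace d (M N))
    (hK : ∀ N (i : I N), (X N i).card ≤ K)
    (hC : ∀ N (i : I N),
      (Finset.univ.filter fun i' : I N => i' ≠ i ∧ (X N i ∩ X N i').Nonempty).card ≤ C)
    (hproj : ∀ N (i : I N), IsOrthProj (P N i))
    (hsupp : ∀ N (i : I N), SupportedOn (X N i) (P N i))
    (hA : ∀ N, ‖A N‖ = 1)
    (hlim : Tendsto (fun N => ‖(∑ i : I N, P N i) (A N)‖) atTop (nhds 0))
    (Ch : ℝ) (hCh : 0 ≤ Ch)
    (h : ∀ N, (i : I N) → QuditSpace d (M N) →L[ℂ] QuditSpace d (M N))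
    (hhsa : ∀ N (i : I N), ∀ v w : QuditSpace d (M N),
      (inner ℂ ((h N i) v) w : ℂ) = inner ℂ v ((h N i) w))
    (hhsupp : ∀ N (i : I N), SupportedOn (X N i) (h N i))
    (hhnorm : ∀ N (i : I N), ‖h N i‖ ≤ Ch) :
    Tendsto (fun N => ‖(∑ i : I N, (P N i) ∘L (h N i) ∘L (P N i)) (A N)‖) atTop (nhds 0) :=
  deformed_hamiltonian_asymptotically_annihilates_general d C M I X P A hC hproj hsupp hA hlim Ch h
    hhsupp hhnorm
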